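/- (Cofinal property of iterated Takahashi translation, Church-Rosser for reduction) If P ↞^l M and M ↠^r Q (i.e., M reduces to P in l steps and to Q in r steps) with 1 ≤ l ≤ r, then P ↠ M^(r*) and Q ↠ M^(r*); in particular M^(r*) is a common reduct of P and Q. -/

import Mathlib

inductive Lam : Type
  | var : ℕ → Lam
  | lam : Lam → Lam
  | app : Lam → Lam → Lam
  deriving DecidableEq

namespace Lam

/-- term size -/
def size : Lam → ℕ
  | var _ => 1
  | lam M => 1 + M.size
  | app M N => 1 + M.size + N.size

/-- lift (shift) free variables ≥ d by 1 -/
def lift (d : ℕ) : Lam → Lam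
  | var n => if n < d then var n else var (n+1)
  | lam M => lam (M.lift (d+1))
  | app M N => app (M.lift d) (N.lift d)

/-- capture-avoiding substitution of N for the free variable x (de Bruijn) -/
def subst : Lam → ℕ → Lam → Lam
  | var n, x, N => if n = x then N else if x < n then var (n-1) else var n
  | lam M, x, N => lam (M.subst (x+1) (N.lift 0))
  | app M P, x, N => app (M.subst x N) (P.subst x N)

/-- number of free occurrences of the variable x -/
def count : Lam → ℕ → ℕ
  | var n, x => if n = x then 1 else 0
  | lam M, x => M.count (x+1)
  | app M N, x => M.count x + N.count x

/-- one-step β-reduction -/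
inductive Step : Lam → Lam → Prop
  | beta (M N : Lam) : Step (app (lam M) N) (M.subst 0 N)
  | appL {M M' : Lam} (N : Lam) : Step M M' → Step (app M N) (app M' N)
  | appR (M : Lam) {N N' : Lam} : Step N N' → Step (app M N) (app M N')
  | abs {M M' : Lam} : Step M M' → Step (lam M) (lam M')

/-- many-step β-reduction (reflexive-transitive closure) -/
def Red : Lam → Lam → Prop := Relation.ReflTransGen Step

/-- n-step β-reduction -/
def Steps : ℕ → Lam → Lam → Prop
  | 0, M, N => M = N
  | n+1, M, N => ∃ P, Step M P ∧ Steps n P N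

/-- Takahashi translation (Gross-Knuth complete development) -/
def star : Lam → Lam
  | var n => var n
  | lam M => lam (star M)
  | app (lam M) N => (star M).subst 0 (star N)
  | app (var n) N => app (var n) (star N)
  | app (app M₁ M₂) N => app (star (app M₁ M₂)) (star N)

/-- iterated Takahashi translation M^(n*) -/
def iterStar (n : ℕ) (M : Lam) : Lam := star^[n] M

end Lam

/-!
Takahashi's triangle property: if `M ⇒ N` by parallel reduction (`Par`) then `N ⇒ M*`.
Applied twice it makes `*` monotone for `⇒`, so each step `M → M₁` of an `n`-step reduction
`M ↠ⁿ P` yields `M₁ ⇒ M*` and hence, inductively, `P ↠ M₁^((n-1)*) ↠ M^(n*)`. Since `M ⇒ M*`,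
the iterates `M^(k*)` form a reduction sequence, so `P ↠ M^(l*) ↠ M^(r*)` for `l ≤ r`.
-/

namespace Lam

theorem lift_lift_of_le {d d' : ℕ} (M : Lam) (h : d ≤ d') :
    (M.lift d).lift (d' + 1) = (M.lift d').lift d := by
  induction M generalizing d d' with
  | var n =>
      simp only [lift]
      split_ifs <;> simp only [lift] <;> split_ifs <;> first | rfl | omega
  | lam M ih => simp only [lift, ih (Nat.succ_le_succ h)]
  | app A B ihA ihB => simp only [lift, ihA h, ihB h]

theorem lift_subst_of_le {x d : ℕ} (M N : Lam) (h : x ≤ d) :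
    (M.subst x N).lift d = (M.lift (d + 1)).subst x (N.lift d) := by
  induction M generalizing x d N with
  | var n =>
      simp only [subst, lift]
      split_ifs <;> simp only [subst, lift] <;> split_ifs <;>
        first | rfl | omega | (congr 1; omega)
  | lam M ih =>
      simp only [subst, lift, ih _ (Nat.succ_le_succ h), lift_lift_of_le N (Nat.zero_le d)]
  | app A B ihA ihB => simp only [subst, lift, ihA _ h, ihB _ h]

theorem lift_subst_of_ge {x d : ℕ} (M N : Lam) (h : d ≤ x) :
    (M.subst x N).lift d = (M.lift d).subst (x + 1) (N.lift d) := by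
  induction M generalizing x d N with
  | var n =>
      simp only [subst, lift]
      split_ifs <;> simp only [subst, lift] <;> split_ifs <;>
        first | rfl | omega | (congr 1; omega)
  | lam M ih =>
      simp only [subst, lift, ih _ (Nat.succ_le_succ h), lift_lift_of_le N (Nat.zero_le d)]
  | app A B ihA ihB => simp only [subst, lift, ihA _ h, ihB _ h]

theorem subst_lift (M N : Lam) (d : ℕ) : (M.lift d).subst d N = M := by
  induction M generalizing d N with
  | var n =>
      simp only [lift]
      split_ifs <;> simp only [subst] <;> split_ifs <;> first | rfl | omega
  | lam M ih => simp only [lift, subst, ih]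
  | app A B ihA ihB => simp only [lift, subst, ihA, ihB]

theorem subst_subst_of_le {x y : ℕ} (M N P : Lam) (h : y ≤ x) :
    (M.subst y N).subst x P = (M.subst (x + 1) (P.lift y)).subst y (N.subst x P) := by
  induction M generalizing x y N P with
  | var n =>
      simp only [subst]
      split_ifs <;> simp only [subst, subst_lift] <;> (try split_ifs) <;> first | rfl | omega
  | lam M ih =>
      simp only [subst, ih _ _ (Nat.succ_le_succ h), lift_lift_of_le P (Nat.zero_le y),
        lift_subst_of_ge N P (Nat.zero_le x)]
  | app A B ihA ihB => simp only [subst, ihA _ _ h, ihB _ _ h]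

theorem Red.lam {M M' : Lam} (h : Red M M') : Red (lam M) (lam M') :=
  Relation.ReflTransGen.lift Lam.lam (fun _ _ => Step.abs) _ _ h

theorem Red.appL {M M' : Lam} (N : Lam) (h : Red M M') : Red (app M N) (app M' N) :=
  Relation.ReflTransGen.lift (app · N) (fun _ _ => Step.appL N) _ _ h

theorem Red.appR (M : Lam) {N N' : Lam} (h : Red N N') : Red (app M N) (app M N') :=
  Relation.ReflTransGen.lift (app M ·) (fun _ _ => Step.appR M) _ _ h

inductive Par : Lam → Lam → Prop
  | var (n : ℕ) : Par (var n) (var n)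
  | lam {M M' : Lam} : Par M M' → Par (lam M) (lam M')
  | app {M M' N N' : Lam} : Par M M' → Par N N' → Par (app M N) (app M' N')
  | beta {M M' N N' : Lam} : Par M M' → Par N N' → Par (app (lam M) N) (M'.subst 0 N')

theorem Par.refl (M : Lam) : Par M M := by
  induction M with
  | var n => exact .var n
  | lam M ih => exact .lam ih
  | app A B ihA ihB => exact .app ihA ihB

theorem Step.par {M N : Lam} (h : Step M N) : Par M N := by
  induction h with
  | beta M N => exact .beta (.refl M) (.refl N)
  | appL N _ ih => exact .app ih (.refl N)
  | appR M _ ih => exact .app (.refl M) ih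
  | abs _ ih => exact .lam ih

theorem Par.red {M N : Lam} (h : Par M N) : Red M N := by
  induction h with
  | var n => exact .refl
  | lam _ ih => exact ih.lam
  | app _ _ ihM ihN => exact (ihM.appL _).trans (ihN.appR _)
  | @beta M M' N N' _ _ ihM ihN =>
      exact ((ihM.lam.appL _).trans (ihN.appR _)).tail (Step.beta M' N')

theorem Par.lift {M N : Lam} (h : Par M N) (d : ℕ) : Par (M.lift d) (N.lift d) := by
  induction h generalizing d with
  | var n => simp only [Lam.lift]; split_ifs <;> exact .refl _
  | lam _ ih => exact .lam (ih (d + 1))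
  | app _ _ ihM ihN => exact .app (ihM d) (ihN d)
  | @beta M M' N N' _ _ ihM ihN =>
      rw [Lam.lift, Lam.lift, lift_subst_of_le M' N' (Nat.zero_le d)]
      exact .beta (ihM (d + 1)) (ihN d)

theorem Par.subst {M M' N N' : Lam} (hM : Par M M') (hN : Par N N') (x : ℕ) :
    Par (M.subst x N) (M'.subst x N') := by
  induction hM generalizing N N' x with
  | var n => simp only [Lam.subst]; split_ifs <;> first | exact hN | exact .refl _
  | lam _ ih => exact .lam (ih (hN.lift 0) (x + 1))
  | app _ _ ihM ihN => exact .app (ihM hN x) (ihN hN x)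
  | @beta A A' B B' _ _ ihA ihB =>
      rw [Lam.subst, Lam.subst, subst_subst_of_le A' B' N' (Nat.zero_le x)]
      exact .beta (ihA (hN.lift 0) (x + 1)) (ihB hN x)

theorem Par.triangle {M N : Lam} (h : Par M N) : Par N (star M) := by
  induction h with
  | var n => exact .var n
  | lam _ ih => exact .lam ih
  | @app M M' N N' hM _ ihM ihN =>
      cases M with
      | var n => cases hM; exact .app (.var n) ihN
      | lam A =>
          cases hM with
          | lam _ =>
              cases ihM with
              | lam hA => exact .beta hA ihN
      | app B C => exact .app ihM ihN
  | beta _ _ ihM ihN => exact ihM.subst ihN 0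

theorem par_star (M : Lam) : Par M (star M) := (Par.refl M).triangle

theorem Par.star {M N : Lam} (h : Par M N) : Par (star M) (star N) := h.triangle.triangle

theorem iterStar_succ (n : ℕ) (M : Lam) : iterStar (n + 1) M = star (iterStar n M) :=
  Function.iterate_succ_apply' star n M

theorem iterStar_succ' (n : ℕ) (M : Lam) : iterStar (n + 1) M = iterStar n (star M) :=
  Function.iterate_succ_apply star n M

theorem Par.iterStar {M N : Lam} (h : Par M N) (n : ℕ) :
    Par (iterStar n M) (iterStar n N) := by
  induction n with
  | zero => exact h
  | succ n ih => rw [iterStar_succ, iterStar_succ]; exact ih.star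

theorem Steps.red_iterStar {n : ℕ} {M P : Lam} (h : Steps n M P) : Red P (iterStar n M) := by
  induction n generalizing M with
  | zero => exact (h : M = P) ▸ .refl
  | succ n ih =>
      obtain ⟨M₁, hM₁, hP⟩ := h
      rw [iterStar_succ']
      exact (ih hP).trans (hM₁.par.triangle.iterStar n).red

theorem red_iterStar_of_le (M : Lam) {k r : ℕ} (h : k ≤ r) :
    Red (iterStar k M) (iterStar r M) := by
  induction h with
  | refl => exact .refl
  | step _ ih => exact ih.trans (by rw [iterStar_succ]; exact (par_star _).red)

end Lam

theorem cofinal_CR_general {M P Q : Lam} {l r : ℕ} (hlr : l ≤ r)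
    (hP : Lam.Steps l M P) (hQ : Lam.Steps r M Q) :
    Lam.Red P (Lam.iterStar r M) ∧ Lam.Red Q (Lam.iterStar r M) :=
  ⟨hP.red_iterStar.trans (Lam.red_iterStar_of_le M hlr), hQ.red_iterStar⟩

/-- Church-Rosser for β-reduction via iterated translation -/
theorem cofinal_CR {M P Q : Lam} {l r : ℕ} (hl : 1 ≤ l) (hlr : l ≤ r)
    (hP : Lam.Steps l M P) (hQ : Lam.Steps r M Q) :
    Lam.Red P (Lam.iterStar r M) ∧ Lam.Red Q (Lam.iterStar r M) :=
  cofinal_CR_general hlr hP hQ
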